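/- Suppose (ψ̄, ψσ, ψσ²) is a smooth solution of the IL^(0,1)QG equations on ℝ × [0,W] × ℝ, with all three fields L-periodic in x, the no-normal-flow boundary condition satisfied, and constant wall circulations, i.e. t ↦ ∫₀ᴸ ∂_yψ̄(x,0,t) dx and t ↦ ∫₀ᴸ ∂_yψ̄(x,W,t) dx are constant. Then the volume integral t ↦ ∫₀ᵂ ∫₀ᴸ ψ̄(x,y,t) dx dy is constant in time. -/

import Mathlib

/-- Partial derivative in `x` of a field of `(x, y, t)`. -/
noncomputable def px (f : ℝ → ℝ → ℝ → ℝ) (x y t : ℝ) : ℝ := deriv (fun x' => f x' y t) x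

/-- Partial derivative in `y` of a field of `(x, y, t)`. -/
noncomputable def py (f : ℝ → ℝ → ℝ → ℝ) (x y t : ℝ) : ℝ := deriv (fun y' => f x y' t) y

/-- Partial derivative in `t` of a field of `(x, y, t)`. -/
noncomputable def pt (f : ℝ → ℝ → ℝ → ℝ) (x y t : ℝ) : ℝ := deriv (fun t' => f x y t') t

/-- Second partial derivative in `x`. -/
noncomputable def pxx (f : ℝ → ℝ → ℝ → ℝ) (x y t : ℝ) : ℝ := deriv (fun x' => px f x' y t) x

/-- Second partial derivative in `y`. -/
noncomputable def pyy (f : ℝ → ℝ → ℝ → ℝ) (x y t : ℝ) : ℝ := deriv (fun y' => py f x y' t) y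

/-- Jacobian bracket `{a,b} = ∂ₓa ∂_yb − ∂_ya ∂ₓb` of two fields of `(x, y, t)`. -/
noncomputable def jac (a b : ℝ → ℝ → ℝ → ℝ) (x y t : ℝ) : ℝ :=
  px a x y t * py b x y t - py a x y t * px b x y t

/-- Potential vorticity `ξ̄ = ∇²ψ̄ − R_S⁻²(ψ̄ − ψσ + (2/3)ψσ²) + βy`. -/
noncomputable def xibar (RS β : ℝ) (ψb ψσ ψσ2 : ℝ → ℝ → ℝ → ℝ) (x y t : ℝ) : ℝ :=
  pxx ψb x y t + pyy ψb x y t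
    - (RS ^ 2)⁻¹ * (ψb x y t - ψσ x y t + 2 / 3 * ψσ2 x y t) + β * y

/-- A field of `(x, y, t)` is smooth (infinitely differentiable as a function on `ℝ³`). -/
def Smooth3 (f : ℝ → ℝ → ℝ → ℝ) : Prop :=
  ContDiff ℝ (⊤ : ℕ∞) (fun z : ℝ × ℝ × ℝ => f z.1 z.2.1 z.2.2)

/-- `L`-periodicity in the zonal direction `x`. -/
def PeriodicX (L : ℝ) (f : ℝ → ℝ → ℝ → ℝ) : Prop :=
  ∀ x y t : ℝ, f (x + L) y t = f x y t

/-- The IL⁽⁰'¹⁾QG equations on the channel `ℝ × [0,W] × ℝ`: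
`∂ₜξ̄ + {ψ̄, ξ̄ − R_S⁻²(ψσ − (2/3)ψσ²)} = 0`, `∂ₜψσ + {ψ̄, ψσ} = 0`,
`∂ₜψσ² + {ψ̄, ψσ²} = 0`. -/
def IL01QG (RS β W : ℝ) (ψb ψσ ψσ2 : ℝ → ℝ → ℝ → ℝ) : Prop :=
  ∀ x t : ℝ, ∀ y ∈ Set.Icc (0:ℝ) W,
    pt (xibar RS β ψb ψσ ψσ2) x y t
      + jac ψb (fun x' y' t' => xibar RS β ψb ψσ ψσ2 x' y' t'
          - (RS ^ 2)⁻¹ * (ψσ x' y' t' - 2 / 3 * ψσ2 x' y' t')) x y t = 0 ∧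
    pt ψσ x y t + jac ψb ψσ x y t = 0 ∧
    pt ψσ2 x y t + jac ψb ψσ2 x y t = 0

/-- No-normal-flow boundary condition: `∂ₓψ̄ = 0` on both channel walls. -/
def NoNormalFlow (W : ℝ) (ψb : ℝ → ℝ → ℝ → ℝ) : Prop :=
  ∀ x t : ℝ, px ψb x 0 t = 0 ∧ px ψb x W t = 0

/-!
The time derivatives of `ξ̄`, `ψσ` and `ψσ²` are Jacobians `{ψ̄, ·}`, and the channel integral of
a Jacobian vanishes: by Clairaut, `{a, b} = ∂_y(b ∂ₓa) − ∂ₓ(b ∂_ya)`, where the `∂ₓ` term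
integrates to zero by periodicity and the `∂_y` term by the no-normal-flow condition. So the
channel integrals of `ξ̄`, `ψσ`, `ψσ²` are conserved. Integrating the definition of `ξ̄` over the
channel, `∂ₓₓψ̄` contributes nothing, `∂_yyψ̄` the difference of the wall circulations and `βy`
a constant, which leaves `R_S⁻² ∫∫ ψ̄` as a combination of conserved quantities.
-/

open MeasureTheory Set

def uncurry3 (f : ℝ → ℝ → ℝ → ℝ) : ℝ × ℝ × ℝ → ℝ := fun z => f z.1 z.2.1 z.2.2

section Partials

variable {f g : ℝ → ℝ → ℝ → ℝ} {x y t : ℝ}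

lemma px_eq_fderiv (hf : DifferentiableAt ℝ (uncurry3 f) (x, y, t)) :
    px f x y t = fderiv ℝ (uncurry3 f) (x, y, t) (1, 0, 0) := by
  have h := hf.hasFDerivAt.comp_hasDerivAt x
    ((hasDerivAt_id x).prodMk ((hasDerivAt_const x y).prodMk (hasDerivAt_const x t)))
  exact h.deriv

lemma py_eq_fderiv (hf : DifferentiableAt ℝ (uncurry3 f) (x, y, t)) :
    py f x y t = fderiv ℝ (uncurry3 f) (x, y, t) (0, 1, 0) := by
  have h := hf.hasFDerivAt.comp_hasDerivAt y
    ((hasDerivAt_const y x).prodMk ((hasDerivAt_id y).prodMk (hasDerivAt_const y t)))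
  exact h.deriv

lemma pt_eq_fderiv (hf : DifferentiableAt ℝ (uncurry3 f) (x, y, t)) :
    pt f x y t = fderiv ℝ (uncurry3 f) (x, y, t) (0, 0, 1) := by
  have h := hf.hasFDerivAt.comp_hasDerivAt t
    ((hasDerivAt_const t x).prodMk ((hasDerivAt_const t y).prodMk (hasDerivAt_id t)))
  exact h.deriv

lemma Smooth3.differentiable (hf : Smooth3 f) : Differentiable ℝ (uncurry3 f) :=
  ContDiff.differentiable hf (by simp)

lemma Smooth3.continuous (hf : Smooth3 f) : Continuous (uncurry3 f) :=
  ContDiff.continuous hf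

lemma Smooth3.hasDerivAt_px (hf : Smooth3 f) : HasDerivAt (fun x' => f x' y t) (px f x y t) x :=
  ((hf.differentiable _).comp x (differentiableAt_id.prodMk
    (differentiableAt_const y |>.prodMk (differentiableAt_const t)))).hasDerivAt

lemma Smooth3.hasDerivAt_py (hf : Smooth3 f) : HasDerivAt (fun y' => f x y' t) (py f x y t) y :=
  ((hf.differentiable _).comp y ((differentiableAt_const x).prodMk
    (differentiableAt_id.prodMk (differentiableAt_const t)))).hasDerivAt

lemma Smooth3.hasDerivAt_pt (hf : Smooth3 f) : HasDerivAt (fun t' => f x y t') (pt f x y t) t :=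
  ((hf.differentiable _).comp t ((differentiableAt_const x).prodMk
    ((differentiableAt_const y).prodMk differentiableAt_id))).hasDerivAt

lemma Smooth3.contDiff_fderiv_apply (hf : Smooth3 f) (v : ℝ × ℝ × ℝ) :
    ContDiff ℝ (⊤ : ℕ∞) fun z => fderiv ℝ (uncurry3 f) z v :=
  (ContDiff.fderiv_right hf (by norm_num)).clm_apply contDiff_const

lemma Smooth3.uncurry3_px (hf : Smooth3 f) :
    uncurry3 (px f) = fun z => fderiv ℝ (uncurry3 f) z (1, 0, 0) :=
  funext fun _ => px_eq_fderiv (hf.differentiable _)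

lemma Smooth3.uncurry3_py (hf : Smooth3 f) :
    uncurry3 (py f) = fun z => fderiv ℝ (uncurry3 f) z (0, 1, 0) :=
  funext fun _ => py_eq_fderiv (hf.differentiable _)

lemma Smooth3.uncurry3_pt (hf : Smooth3 f) :
    uncurry3 (pt f) = fun z => fderiv ℝ (uncurry3 f) z (0, 0, 1) :=
  funext fun _ => pt_eq_fderiv (hf.differentiable _)

lemma Smooth3.smooth_px (hf : Smooth3 f) : Smooth3 (px f) := by
  change ContDiff ℝ _ (uncurry3 (px f))
  exact hf.uncurry3_px ▸ hf.contDiff_fderiv_apply _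

lemma Smooth3.smooth_py (hf : Smooth3 f) : Smooth3 (py f) := by
  change ContDiff ℝ _ (uncurry3 (py f))
  exact hf.uncurry3_py ▸ hf.contDiff_fderiv_apply _

lemma Smooth3.smooth_pt (hf : Smooth3 f) : Smooth3 (pt f) := by
  change ContDiff ℝ _ (uncurry3 (pt f))
  exact hf.uncurry3_pt ▸ hf.contDiff_fderiv_apply _

lemma Smooth3.py_px (hf : Smooth3 f) (x y t : ℝ) : py (px f) x y t = px (py f) x y t := by
  have hD : Differentiable ℝ (fderiv ℝ (uncurry3 f)) :=
    (ContDiff.fderiv_right hf (m := 1) (WithTop.coe_le_coe.2 le_top)).differentiable one_ne_zero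
  have hsymm : IsSymmSndFDerivAt ℝ (uncurry3 f) (x, y, t) :=
    (ContDiff.contDiffAt hf).isSymmSndFDerivAt
      (by rw [minSmoothness_of_isRCLikeNormedField]; exact WithTop.coe_le_coe.2 le_top)
  rw [py_eq_fderiv (hf.smooth_px.differentiable _), px_eq_fderiv (hf.smooth_py.differentiable _),
    hf.uncurry3_px, hf.uncurry3_py, fderiv_clm_apply (hD _) (differentiableAt_const _),
    fderiv_clm_apply (hD _) (differentiableAt_const _)]
  simpa using hsymm (0, 1, 0) (1, 0, 0)

lemma Smooth3.px_mul (hf : Smooth3 f) (hg : Smooth3 g) :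
    px (f * g) x y t = px f x y t * g x y t + f x y t * px g x y t :=
  (hf.hasDerivAt_px.mul hg.hasDerivAt_px).deriv

lemma Smooth3.py_mul (hf : Smooth3 f) (hg : Smooth3 g) :
    py (f * g) x y t = py f x y t * g x y t + f x y t * py g x y t :=
  (hf.hasDerivAt_py.mul hg.hasDerivAt_py).deriv

lemma Smooth3.mul (hf : Smooth3 f) (hg : Smooth3 g) : Smooth3 (f * g) :=
  ContDiff.mul hf hg

lemma Smooth3.integral_px (hf : Smooth3 f) (y t a b : ℝ) :
    ∫ x in a..b, px f x y t = f b y t - f a y t :=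
  intervalIntegral.integral_eq_sub_of_hasDerivAt (fun _ _ => hf.hasDerivAt_px)
    (hf.smooth_px.continuous.comp₃ continuous_id continuous_const continuous_const
      |>.intervalIntegrable _ _)

lemma Smooth3.integral_py (hf : Smooth3 f) (x t a b : ℝ) :
    ∫ y in a..b, py f x y t = f x b t - f x a t :=
  intervalIntegral.integral_eq_sub_of_hasDerivAt (fun _ _ => hf.hasDerivAt_py)
    (hf.smooth_py.continuous.comp₃ continuous_const continuous_id continuous_const
      |>.intervalIntegrable _ _)

lemma Smooth3.integral_pt (hf : Smooth3 f) (x y a b : ℝ) :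
    ∫ t in a..b, pt f x y t = f x y b - f x y a :=
  intervalIntegral.integral_eq_sub_of_hasDerivAt (fun _ _ => hf.hasDerivAt_pt)
    (hf.smooth_pt.continuous.comp₃ continuous_const continuous_const continuous_id
      |>.intervalIntegrable _ _)

end Partials

section Periodic

variable {L : ℝ} {f g : ℝ → ℝ → ℝ → ℝ}

lemma PeriodicX.periodic_px (hp : PeriodicX L f) : PeriodicX L (px f) := fun x y t => by
  unfold PeriodicX at hp
  simp only [px, ← deriv_comp_add_const, hp]

lemma PeriodicX.periodic_py (hp : PeriodicX L f) : PeriodicX L (py f) := fun x y t => by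
  unfold PeriodicX at hp
  simp only [py, hp]

lemma PeriodicX.mul (hp : PeriodicX L f) (hq : PeriodicX L g) : PeriodicX L (f * g) :=
  fun x y t => by simp only [Pi.mul_apply, hp x y t, hq x y t]

lemma PeriodicX.integral_px_eq_zero (hp : PeriodicX L f) (hf : Smooth3 f) (y t : ℝ) :
    ∫ x in (0:ℝ)..L, px f x y t = 0 := by
  simpa [hf.integral_px, sub_eq_zero] using hp 0 y t

end Periodic

lemma intervalIntegral_swap_of_continuous {F : ℝ → ℝ → ℝ} (hF : Continuous (Function.uncurry F))
    (a b c d : ℝ) : ∫ x in a..b, ∫ y in c..d, F x y = ∫ y in c..d, ∫ x in a..b, F x y :=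
  intervalIntegral_intervalIntegral_swap <|
    (hF.continuousOn.integrableOn_compact (isCompact_uIcc.prod isCompact_uIcc)).mono_set
      (prod_mono uIoc_subset_uIcc uIoc_subset_uIcc)

noncomputable def channelIntegral (L W : ℝ) (f : ℝ → ℝ → ℝ → ℝ) (t : ℝ) : ℝ :=
  ∫ y in (0:ℝ)..W, ∫ x in (0:ℝ)..L, f x y t

section ChannelIntegral

variable {L W : ℝ} {f g : ℝ → ℝ → ℝ → ℝ}

lemma intervalIntegrable_x (hf : Continuous (uncurry3 f)) (y t a b : ℝ) :
    IntervalIntegrable (fun x => f x y t) volume a b :=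
  (hf.comp₃ continuous_id continuous_const continuous_const).intervalIntegrable a b

lemma continuous_integral_x (hf : Continuous (uncurry3 f)) (t : ℝ) :
    Continuous fun y => ∫ x in (0:ℝ)..L, f x y t :=
  intervalIntegral.continuous_parametric_intervalIntegral_of_continuous'
    (hf.comp₃ continuous_snd continuous_fst continuous_const) 0 L

lemma channelIntegral_add (hf : Continuous (uncurry3 f)) (hg : Continuous (uncurry3 g)) (t : ℝ) :
    channelIntegral L W (f + g) t = channelIntegral L W f t + channelIntegral L W g t := by
  rw [channelIntegral, channelIntegral, channelIntegral, ← intervalIntegral.integral_add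
    ((continuous_integral_x hf t).intervalIntegrable _ _)
    ((continuous_integral_x hg t).intervalIntegrable _ _)]
  exact intervalIntegral.integral_congr fun y _ => intervalIntegral.integral_add
    (intervalIntegrable_x hf y t 0 L) (intervalIntegrable_x hg y t 0 L)

lemma channelIntegral_sub (hf : Continuous (uncurry3 f)) (hg : Continuous (uncurry3 g)) (t : ℝ) :
    channelIntegral L W (f - g) t = channelIntegral L W f t - channelIntegral L W g t := by
  rw [channelIntegral, channelIntegral, channelIntegral, ← intervalIntegral.integral_sub
    ((continuous_integral_x hf t).intervalIntegrable _ _)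
    ((continuous_integral_x hg t).intervalIntegrable _ _)]
  exact intervalIntegral.integral_congr fun y _ => intervalIntegral.integral_sub
    (intervalIntegrable_x hf y t 0 L) (intervalIntegrable_x hg y t 0 L)

lemma channelIntegral_smul (c : ℝ) (t : ℝ) :
    channelIntegral L W (c • f) t = c * channelIntegral L W f t := by
  simp [channelIntegral, intervalIntegral.integral_const_mul]

lemma Smooth3.channelIntegral_py (hf : Smooth3 f) (t : ℝ) :
    channelIntegral L W (py f) t = (∫ x in (0:ℝ)..L, f x W t) - ∫ x in (0:ℝ)..L, f x 0 t := by
  rw [channelIntegral, intervalIntegral_swap_of_continuous (F := fun y x => py f x y t)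
    (hf.smooth_py.continuous.comp₃ continuous_snd continuous_fst continuous_const),
    ← intervalIntegral.integral_sub
      (intervalIntegrable_x hf.continuous W t 0 L) (intervalIntegrable_x hf.continuous 0 t 0 L)]
  exact intervalIntegral.integral_congr fun x _ => hf.integral_py x t 0 W

lemma PeriodicX.channelIntegral_px_eq_zero (hp : PeriodicX L f) (hf : Smooth3 f) (t : ℝ) :
    channelIntegral L W (px f) t = 0 := by
  simp [channelIntegral, hp.integral_px_eq_zero hf]

lemma Smooth3.channelIntegral_sub_eq_integral_pt (hf : Smooth3 f) (t₁ t₂ : ℝ) :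
    channelIntegral L W f t₂ - channelIntegral L W f t₁
      = ∫ t in t₁..t₂, channelIntegral L W (pt f) t := by
  have inner : ∀ y, (∫ x in (0:ℝ)..L, f x y t₂) - (∫ x in (0:ℝ)..L, f x y t₁)
      = ∫ t in t₁..t₂, ∫ x in (0:ℝ)..L, pt f x y t := fun y => by
    rw [intervalIntegral_swap_of_continuous (F := fun t x => pt f x y t)
      (hf.smooth_pt.continuous.comp₃ continuous_snd continuous_const continuous_fst),
      ← intervalIntegral.integral_sub (intervalIntegrable_x hf.continuous y t₂ 0 L)
        (intervalIntegrable_x hf.continuous y t₁ 0 L)]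
    exact intervalIntegral.integral_congr fun x _ => (hf.integral_pt x y t₁ t₂).symm
  have hpt : Continuous fun p : ℝ × ℝ => ∫ x in (0:ℝ)..L, pt f x p.1 p.2 :=
    intervalIntegral.continuous_parametric_intervalIntegral_of_continuous'
      (hf.smooth_pt.continuous.comp₃ continuous_snd (continuous_fst.comp continuous_fst)
        (continuous_snd.comp continuous_fst)) 0 L
  rw [channelIntegral, channelIntegral, ← intervalIntegral.integral_sub
    ((continuous_integral_x hf.continuous t₂).intervalIntegrable _ _)
    ((continuous_integral_x hf.continuous t₁).intervalIntegrable _ _),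
    intervalIntegral.integral_congr fun y _ => inner y]
  exact intervalIntegral_swap_of_continuous (F := fun y t => ∫ x in (0:ℝ)..L, pt f x y t) hpt ..

end ChannelIntegral

section Transport

variable {L W : ℝ} {a b h : ℝ → ℝ → ℝ → ℝ}

lemma Smooth3.jac_eq (ha : Smooth3 a) (hb : Smooth3 b) :
    jac a b = py (b * px a) - px (b * py a) := by
  funext x y t
  simp only [jac, Pi.sub_apply, hb.py_mul ha.smooth_px, hb.px_mul ha.smooth_py, ha.py_px]
  ring

lemma channelIntegral_jac_eq_zero (ha : Smooth3 a) (hb : Smooth3 b)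
    (hpa : PeriodicX L a) (hpb : PeriodicX L b) (hbc : NoNormalFlow W a) (t : ℝ) :
    channelIntegral L W (jac a b) t = 0 := by
  have hpx : Smooth3 (b * px a) := hb.mul ha.smooth_px
  have hpy : Smooth3 (b * py a) := hb.mul ha.smooth_py
  rw [ha.jac_eq hb, channelIntegral_sub hpx.smooth_py.continuous hpy.smooth_px.continuous,
    hpx.channelIntegral_py, (hpb.mul hpa.periodic_py).channelIntegral_px_eq_zero hpy]
  simp [(hbc _ t).1, (hbc _ t).2]

lemma channelIntegral_eq_of_transport (ha : Smooth3 a) (hb : Smooth3 b) (hh : Smooth3 h)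
    (hpa : PeriodicX L a) (hpb : PeriodicX L b) (hbc : NoNormalFlow W a) (hW : 0 ≤ W)
    (heq : ∀ x t : ℝ, ∀ y ∈ Icc 0 W, pt h x y t + jac a b x y t = 0) (t₁ t₂ : ℝ) :
    channelIntegral L W h t₁ = channelIntegral L W h t₂ := by
  have hpt : ∀ t, channelIntegral L W (pt h) t = -channelIntegral L W (jac a b) t := fun t => by
    rw [channelIntegral, channelIntegral, ← intervalIntegral.integral_neg]
    refine intervalIntegral.integral_congr fun y hy => ?_
    rw [uIcc_of_le hW] at hy
    rw [← intervalIntegral.integral_neg]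
    exact intervalIntegral.integral_congr fun x _ => eq_neg_of_add_eq_zero_left (heq x t y hy)
  have hftc := hh.channelIntegral_sub_eq_integral_pt (L := L) (W := W) t₁ t₂
  simp only [hpt, channelIntegral_jac_eq_zero ha hb hpa hpb hbc, neg_zero,
    intervalIntegral.integral_zero, sub_eq_zero] at hftc
  exact hftc.symm

end Transport

section PotentialVorticity

variable {L W β RS : ℝ} {ψb ψσ ψσ2 : ℝ → ℝ → ℝ → ℝ}

lemma xibar_eq : xibar RS β ψb ψσ ψσ2
    = pxx ψb + pyy ψb - (RS ^ 2)⁻¹ • (ψb - ψσ + (2 / 3 : ℝ) • ψσ2) + fun _ y _ => β * y := by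
  funext x y t
  simp only [xibar, Pi.add_apply, Pi.sub_apply, Pi.smul_apply, smul_eq_mul]

lemma Smooth3.smooth_xibar (hψb : Smooth3 ψb) (hψσ : Smooth3 ψσ) (hψσ2 : Smooth3 ψσ2) :
    Smooth3 (xibar RS β ψb ψσ ψσ2) := by
  have hxx : Smooth3 (pxx ψb) := hψb.smooth_px.smooth_px
  have hyy : Smooth3 (pyy ψb) := hψb.smooth_py.smooth_py
  unfold Smooth3 xibar at *
  fun_prop

lemma PeriodicX.periodic_xibar (hψb : PeriodicX L ψb) (hψσ : PeriodicX L ψσ)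
    (hψσ2 : PeriodicX L ψσ2) :
    PeriodicX L (xibar RS β ψb ψσ ψσ2) := fun x y t => by
  have hxx : pxx ψb (x + L) y t = pxx ψb x y t := hψb.periodic_px.periodic_px x y t
  have hyy : pyy ψb (x + L) y t = pyy ψb x y t := hψb.periodic_py.periodic_py x y t
  simp only [xibar, hxx, hyy, hψb x y t, hψσ x y t, hψσ2 x y t]

lemma channelIntegral_xibar (hψb : Smooth3 ψb) (hψσ : Smooth3 ψσ) (hψσ2 : Smooth3 ψσ2)
    (hperb : PeriodicX L ψb) (t : ℝ) :
    channelIntegral L W (xibar RS β ψb ψσ ψσ2) t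
      = ((∫ x in (0:ℝ)..L, py ψb x W t) - ∫ x in (0:ℝ)..L, py ψb x 0 t)
        - (RS ^ 2)⁻¹ * (channelIntegral L W ψb t - channelIntegral L W ψσ t
          + 2 / 3 * channelIntegral L W ψσ2 t)
        + channelIntegral L W (fun _ y _ => β * y) t := by
  have hxx : channelIntegral L W (pxx ψb) t = 0 :=
    hperb.periodic_px.channelIntegral_px_eq_zero hψb.smooth_px t
  have hyy : channelIntegral L W (pyy ψb) t
      = (∫ x in (0:ℝ)..L, py ψb x W t) - ∫ x in (0:ℝ)..L, py ψb x 0 t :=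
    hψb.smooth_py.channelIntegral_py t
  have hxx' : Smooth3 (pxx ψb) := hψb.smooth_px.smooth_px
  have hyy' : Smooth3 (pyy ψb) := hψb.smooth_py.smooth_py
  rw [xibar_eq, channelIntegral_add, channelIntegral_sub, channelIntegral_add,
    channelIntegral_smul, channelIntegral_add, channelIntegral_sub, channelIntegral_smul,
    hxx, hyy, zero_add]
  all_goals
    unfold uncurry3 Smooth3 at *
    simp -failIfUnchanged only [Pi.add_apply, Pi.sub_apply, Pi.smul_apply, smul_eq_mul]
    fun_prop

end PotentialVorticity

theorem volume_conserved_general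
    (L W β RS : ℝ) (hW : 0 < W) (hRS : 0 < RS)
    (ψb ψσ ψσ2 : ℝ → ℝ → ℝ → ℝ)
    (hψb : Smooth3 ψb) (hψσ : Smooth3 ψσ) (hψσ2 : Smooth3 ψσ2)
    (hperb : PeriodicX L ψb) (hperσ : PeriodicX L ψσ) (hperσ2 : PeriodicX L ψσ2)
    (heqs : IL01QG RS β W ψb ψσ ψσ2)
    (hbc : NoNormalFlow W ψb)
    (hcirc0 : ∀ t₁ t₂ : ℝ,
      (∫ x in (0:ℝ)..L, py ψb x 0 t₁) = ∫ x in (0:ℝ)..L, py ψb x 0 t₂)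
    (hcircW : ∀ t₁ t₂ : ℝ,
      (∫ x in (0:ℝ)..L, py ψb x W t₁) = ∫ x in (0:ℝ)..L, py ψb x W t₂) :
    ∀ t₁ t₂ : ℝ,
      (∫ y in (0:ℝ)..W, ∫ x in (0:ℝ)..L, ψb x y t₁)
        = ∫ y in (0:ℝ)..W, ∫ x in (0:ℝ)..L, ψb x y t₂ := by
  intro t₁ t₂
  have hξ := hψb.smooth_xibar (RS := RS) (β := β) hψσ hψσ2
  have hperξ := hperb.periodic_xibar (RS := RS) (β := β) hperσ hperσ2
  have hσ := channelIntegral_eq_of_transport hψb hψσ hψσ hperb hperσ hbc hW.le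
    (fun x t y hy => (heqs x t y hy).2.1) t₁ t₂
  have hσ2 := channelIntegral_eq_of_transport hψb hψσ2 hψσ2 hperb hperσ2 hbc hW.le
    (fun x t y hy => (heqs x t y hy).2.2) t₁ t₂
  have hpv := channelIntegral_eq_of_transport hψb
    (by unfold Smooth3 at *; fun_prop) hξ hperb
    (fun x y t => by simp only [hperξ x y t, hperσ x y t, hperσ2 x y t]) hbc hW.le
    (fun x t y hy => (heqs x t y hy).1) t₁ t₂
  have hβ : channelIntegral L W (fun _ y _ => β * y) t₁
      = channelIntegral L W (fun _ y _ => β * y) t₂ := rfl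
  rw [channelIntegral_xibar hψb hψσ hψσ2 hperb, channelIntegral_xibar hψb hψσ hψσ2 hperb,
    hcirc0 t₁ t₂, hcircW t₁ t₂, hσ, hσ2, hβ] at hpv
  have hc : (RS ^ 2)⁻¹ ≠ 0 := by positivity
  show channelIntegral L W ψb t₁ = channelIntegral L W ψb t₂
  exact mul_left_cancel₀ hc (by linarith)

/-- Volume conservation: along smooth `x`-periodic solutions of the IL⁽⁰'¹⁾QG
equations with the no-normal-flow boundary condition and constant wall
circulations, the integral `∫∫ ψ̄ dx dy` is constant in time. -/
theorem volume_conserved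
    (L W β RS : ℝ) (hL : 0 < L) (hW : 0 < W) (hRS : 0 < RS)
    (ψb ψσ ψσ2 : ℝ → ℝ → ℝ → ℝ)
    (hψb : Smooth3 ψb) (hψσ : Smooth3 ψσ) (hψσ2 : Smooth3 ψσ2)
    (hperb : PeriodicX L ψb) (hperσ : PeriodicX L ψσ) (hperσ2 : PeriodicX L ψσ2)
    (heqs : IL01QG RS β W ψb ψσ ψσ2)
    (hbc : NoNormalFlow W ψb)
    (hcirc0 : ∀ t₁ t₂ : ℝ,
      (∫ x in (0:ℝ)..L, py ψb x 0 t₁) = ∫ x in (0:ℝ)..L, py ψb x 0 t₂)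
    (hcircW : ∀ t₁ t₂ : ℝ,
      (∫ x in (0:ℝ)..L, py ψb x W t₁) = ∫ x in (0:ℝ)..L, py ψb x W t₂) :
    ∀ t₁ t₂ : ℝ,
      (∫ y in (0:ℝ)..W, ∫ x in (0:ℝ)..L, ψb x y t₁)
        = ∫ y in (0:ℝ)..W, ∫ x in (0:ℝ)..L, ψb x y t₂ :=
  volume_conserved_general L W β RS hW hRS ψb ψσ ψσ2 hψb hψσ hψσ2 hperb hperσ hperσ2 heqs hbc hcirc0
    hcircW
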